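/- arXiv:1208.4737 — 3 statements merged into one kernel-verified Lean document; each statement's English description precedes it below -/
import Mathlib

section
/- Let there be given, for every integer k, abelian groups A_k, B_k, C_k and A'_k, B'_k, C'_k together with homomorphisms forming two long exact sequences ... → A_k →i_k B_k →j_k C_k →∂_k A_{k-1} → ... and ... → A'_k →i'_k B'_k →j'_k C'_k →∂'_k A'_{k-1} → ..., and vertical homomorphisms a_k : A_k → A'_k, b_k : B_k → B'_k, c_k : C_k → C'_k commuting with all maps. Fix an integer n and assume that c_k is an isomorphism for every k ≤ n and that A'_k = 0 for every k ≥ n. For k ≤ n define Φ_k : B'_k → A_{k-1} by Φ_k = ∂_k ∘ c_k^{-1} ∘ j'_k. Then the sequence A_n →i_n B_n →b_n B'_n →Φ_n A_{n-1} →(a_{n-1}, i_{n-1}) A'_{n-1} ⊕ B_{n-1} →ψ B'_{n-1} →Φ_{n-1} A_{n-2} → ... is exact, where ψ(x, y) = i'_{n-1}(x) − b_{n-1}(y). -/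
/-- Abstract form of Proposition 2.7: two long exact sequences connected by a chain map,
with c_k an isomorphism for k ≤ n and A'_k = 0 for k ≥ n, yield a long exact sequence
A_n → B_n → B'_n → A_{n-1} → A'_{n-1} ⊕ B_{n-1} → B'_{n-1} → A_{n-2} → ... -/
theorem postnikov_long_exact_sequence
    (A B C A' B' C' : ℤ → Type)
    [∀ k, AddCommGroup (A k)] [∀ k, AddCommGroup (B k)] [∀ k, AddCommGroup (C k)]
    [∀ k, AddCommGroup (A' k)] [∀ k, AddCommGroup (B' k)] [∀ k, AddCommGroup (C' k)]
    (i : ∀ k, A k →+ B k) (j : ∀ k, B k →+ C k) (d : ∀ k, C k →+ A (k - 1))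
    (i' : ∀ k, A' k →+ B' k) (j' : ∀ k, B' k →+ C' k) (d' : ∀ k, C' k →+ A' (k - 1))
    (a : ∀ k, A k →+ A' k) (b : ∀ k, B k →+ B' k) (c : ∀ k, C k →+ C' k)
    -- exactness of the two rows
    (hex1 : ∀ k, (i k).range = (j k).ker)
    (hex2 : ∀ k, (j k).range = (d k).ker)
    (hex3 : ∀ k, (d k).range = (i (k - 1)).ker)
    (hex1' : ∀ k, (i' k).range = (j' k).ker)
    (hex2' : ∀ k, (j' k).range = (d' k).ker)
    (hex3' : ∀ k, (d' k).range = (i' (k - 1)).ker)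
    -- the vertical maps commute with everything
    (hcomm1 : ∀ k, (b k).comp (i k) = (i' k).comp (a k))
    (hcomm2 : ∀ k, (c k).comp (j k) = (j' k).comp (b k))
    (hcomm3 : ∀ k, (a (k - 1)).comp (d k) = (d' k).comp (c k))
    (n : ℤ)
    (hc : ∀ k ≤ n, Function.Bijective (c k))
    (hA' : ∀ k ≥ n, Subsingleton (A' k))
    -- the connecting maps Φ_k = ∂_k ∘ c_k⁻¹ ∘ j'_k
    (Φ : ∀ k, B' k →+ A (k - 1))
    (hΦ : ∀ k ≤ n, ∀ (y : B' k) (x : C k), c k x = j' k y → Φ k y = d k x) :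
    -- exactness at B_n
    (i n).range = (b n).ker ∧
    -- exactness at B'_n
    (b n).range = (Φ n).ker ∧
    -- exactness at the remaining spots, for all k ≤ n
    (∀ k ≤ n,
      -- at A_{k-1}
      (Φ k).range = ((a (k - 1)).prod (i (k - 1))).ker ∧
      -- at A'_{k-1} ⊕ B_{k-1}
      ((a (k - 1)).prod (i (k - 1))).range =
        ((i' (k - 1)).comp (AddMonoidHom.fst (A' (k - 1)) (B (k - 1))) -
          (b (k - 1)).comp (AddMonoidHom.snd (A' (k - 1)) (B (k - 1)))).ker ∧
      -- at B'_{k-1}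
      ((i' (k - 1)).comp (AddMonoidHom.fst (A' (k - 1)) (B (k - 1))) -
          (b (k - 1)).comp (AddMonoidHom.snd (A' (k - 1)) (B (k - 1)))).range =
        (Φ (k - 1)).ker) := by
  -- pointwise composition-zero facts
  have hji : ∀ k (x : A k), j k (i k x) = 0 := fun k x => by
    rw [← AddMonoidHom.mem_ker, ← hex1]; exact ⟨x, rfl⟩
  have hdj : ∀ k (x : B k), d k (j k x) = 0 := fun k x => by
    rw [← AddMonoidHom.mem_ker, ← hex2]; exact ⟨x, rfl⟩
  have hid : ∀ k (x : C k), i (k - 1) (d k x) = 0 := fun k x => by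
    rw [← AddMonoidHom.mem_ker, ← hex3]; exact ⟨x, rfl⟩
  have hji' : ∀ k (x : A' k), j' k (i' k x) = 0 := fun k x => by
    rw [← AddMonoidHom.mem_ker, ← hex1']; exact ⟨x, rfl⟩
  have hdj' : ∀ k (x : B' k), d' k (j' k x) = 0 := fun k x => by
    rw [← AddMonoidHom.mem_ker, ← hex2']; exact ⟨x, rfl⟩
  -- pointwise commutation
  have hc1 : ∀ k (x : A k), b k (i k x) = i' k (a k x) := fun k x =>
    DFunLike.congr_fun (hcomm1 k) x
  have hc2 : ∀ k (x : B k), c k (j k x) = j' k (b k x) := fun k x =>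
    DFunLike.congr_fun (hcomm2 k) x
  have hc3 : ∀ k (x : C k), a (k - 1) (d k x) = d' k (c k x) := fun k x =>
    DFunLike.congr_fun (hcomm3 k) x
  -- Φ kills b and i'
  have hΦb : ∀ k, k ≤ n → ∀ (y : B k), Φ k (b k y) = 0 := by
    intro k hk y
    rw [hΦ k hk (b k y) (j k y) (hc2 k y)]
    exact hdj k y
  have hΦi' : ∀ k, k ≤ n → ∀ (x : A' k), Φ k (i' k x) = 0 := by
    intro k hk x
    rw [hΦ k hk (i' k x) 0 (by rw [map_zero, hji' k x])]
    exact map_zero _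
  -- the key backwards chase at B'_k, for k ≤ n: if Φ k y' = 0 then y' - b k y = i' k x'
  have key : ∀ k, k ≤ n → ∀ (y' : B' k), Φ k y' = 0 →
      ∃ (y : B k) (x' : A' k), y' = i' k x' + b k y := by
    intro k hk y' hy'
    obtain ⟨x, hx⟩ := (hc k hk).2 (j' k y')
    have hdx : d k x = 0 := by rw [← hΦ k hk y' x hx]; exact hy'
    have : x ∈ (j k).range := by rw [hex2]; exact hdx
    obtain ⟨y, hy⟩ := this
    have : y' - b k y ∈ (j' k).ker := by
      rw [AddMonoidHom.mem_ker, map_sub, ← hc2 k y, hy, hx, sub_self]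
    rw [← hex1'] at this
    obtain ⟨x', hx'⟩ := this
    exact ⟨y, x', by rw [hx']; abel⟩
  refine ⟨?_, ?_, ?_⟩
  · -- exactness at B_n
    ext y
    simp only [AddMonoidHom.mem_range, AddMonoidHom.mem_ker]
    constructor
    · rintro ⟨x, rfl⟩
      haveI := hA' n le_rfl
      rw [hc1, Subsingleton.elim (a n x) 0, map_zero]
    · intro hy
      have : j n y = 0 := (hc n le_rfl).1 (by rw [hc2, hy, map_zero, map_zero])
      have : y ∈ (j n).ker := this
      rw [← hex1] at this
      exact this
  · -- exactness at B'_n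
    ext y'
    simp only [AddMonoidHom.mem_range, AddMonoidHom.mem_ker]
    constructor
    · rintro ⟨y, rfl⟩
      exact hΦb n le_rfl y
    · intro hy'
      obtain ⟨y, x', hx'⟩ := key n le_rfl y' hy'
      haveI := hA' n le_rfl
      refine ⟨y, ?_⟩
      rw [hx', Subsingleton.elim x' 0, map_zero, zero_add]
  · intro k hk
    have hk1 : k - 1 ≤ n := by omega
    refine ⟨?_, ?_, ?_⟩
    · -- exactness at A_{k-1}
      ext u
      simp only [AddMonoidHom.mem_range, AddMonoidHom.mem_ker,
        AddMonoidHom.prod_apply, Prod.mk_eq_zero]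
      constructor
      · rintro ⟨y', rfl⟩
        obtain ⟨x, hx⟩ := (hc k hk).2 (j' k y')
        rw [hΦ k hk y' x hx]
        exact ⟨by rw [hc3, hx, hdj'], hid k x⟩
      · rintro ⟨h1, h2⟩
        have : u ∈ (d k).range := by rw [hex3]; exact h2
        obtain ⟨x, hx⟩ := this
        have : c k x ∈ (d' k).ker := by
          rw [AddMonoidHom.mem_ker, ← hc3, hx, h1]
        rw [← hex2'] at this
        obtain ⟨y', hy'⟩ := this
        exact ⟨y', by rw [hΦ k hk y' x hy'.symm, hx]⟩
    · -- exactness at A'_{k-1} ⊕ B_{k-1}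
      ext p
      obtain ⟨x', y⟩ := p
      simp only [AddMonoidHom.mem_range, AddMonoidHom.mem_ker,
        AddMonoidHom.prod_apply, AddMonoidHom.sub_apply, AddMonoidHom.comp_apply,
        AddMonoidHom.coe_fst, AddMonoidHom.coe_snd, Prod.mk.injEq, sub_eq_zero]
      constructor
      · rintro ⟨u, rfl, rfl⟩
        exact (hc1 _ u).symm
      · intro h
        have hjy : j (k - 1) y = 0 :=
          (hc (k - 1) hk1).1 (by rw [hc2, ← h, hji', map_zero])
        have : y ∈ (j (k - 1)).ker := hjy
        rw [← hex1] at this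
        obtain ⟨u, hu⟩ := this
        have : x' - a (k - 1) u ∈ (i' (k - 1)).ker := by
          rw [AddMonoidHom.mem_ker, map_sub, ← hc1, hu, ← h, sub_self]
        rw [← hex3'] at this
        obtain ⟨z', hz'⟩ := this
        obtain ⟨x, hx⟩ := (hc k hk).2 z'
        refine ⟨u + d k x, ?_, ?_⟩
        · rw [map_add, hc3, hx, hz']; abel
        · rw [map_add, hid, add_zero, hu]
    · -- exactness at B'_{k-1}
      ext y'
      simp only [AddMonoidHom.mem_range, AddMonoidHom.mem_ker,
        AddMonoidHom.sub_apply, AddMonoidHom.comp_apply,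
        AddMonoidHom.coe_fst, AddMonoidHom.coe_snd, Prod.exists]
      constructor
      · rintro ⟨x', y, rfl⟩
        rw [map_sub, hΦi' (k - 1) hk1, hΦb (k - 1) hk1, sub_zero]
      · intro hy'
        obtain ⟨y, x', hx'⟩ := key (k - 1) hk1 y' hy'
        refine ⟨x', -y, ?_⟩
        rw [map_neg, sub_neg_eq_add, hx']
end

section
/- With the data and hypotheses of the two connected long exact sequences (chain map (a_k, b_k, c_k) between long exact sequences, c_k an isomorphism for k ≤ n, A'_k = 0 for k ≥ n), one has ker(b_n : B_n → B'_n) = im(i_n : A_n → B_n), and consequently ker(b_n) = ker(j_n : B_n → C_n), so that im(b_n) ≅ im(j_n). -/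
/-- Abstract Corollary 2.8: in the same setup, ker b_n = im i_n = ker j_n,
hence im b_n ≅ im j_n. -/
theorem ker_bn_eq_range_in
    (A B C A' B' C' : ℤ → Type)
    [∀ k, AddCommGroup (A k)] [∀ k, AddCommGroup (B k)] [∀ k, AddCommGroup (C k)]
    [∀ k, AddCommGroup (A' k)] [∀ k, AddCommGroup (B' k)] [∀ k, AddCommGroup (C' k)]
    (i : ∀ k, A k →+ B k) (j : ∀ k, B k →+ C k) (d : ∀ k, C k →+ A (k - 1))
    (i' : ∀ k, A' k →+ B' k) (j' : ∀ k, B' k →+ C' k) (d' : ∀ k, C' k →+ A' (k - 1))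
    (a : ∀ k, A k →+ A' k) (b : ∀ k, B k →+ B' k) (c : ∀ k, C k →+ C' k)
    (hex1 : ∀ k, (i k).range = (j k).ker)
    (hex2 : ∀ k, (j k).range = (d k).ker)
    (hex3 : ∀ k, (d k).range = (i (k - 1)).ker)
    (hex1' : ∀ k, (i' k).range = (j' k).ker)
    (hex2' : ∀ k, (j' k).range = (d' k).ker)
    (hex3' : ∀ k, (d' k).range = (i' (k - 1)).ker)
    (hcomm1 : ∀ k, (b k).comp (i k) = (i' k).comp (a k))
    (hcomm2 : ∀ k, (c k).comp (j k) = (j' k).comp (b k))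
    (hcomm3 : ∀ k, (a (k - 1)).comp (d k) = (d' k).comp (c k))
    (n : ℤ)
    (hc : ∀ k ≤ n, Function.Bijective (c k))
    (hA' : ∀ k ≥ n, Subsingleton (A' k)) :
    (b n).ker = (i n).range ∧
    (b n).ker = (j n).ker ∧
    Nonempty ((b n).range ≃+ (j n).range) := by

  have hker : (b n).ker = (j n).ker := by
    ext x
    constructor
    · intro hx
      have h1 : (c n) ((j n) x) = 0 := by
        have := congrArg (fun f => f x) (hcomm2 n)
        simp only [AddMonoidHom.comp_apply] at this
        rw [this, AddMonoidHom.mem_ker.mp hx, map_zero]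
      have hinj := (hc n le_rfl).1
      exact AddMonoidHom.mem_ker.mpr (hinj (by simpa using h1))
    · intro hx
      have hx' : x ∈ (i n).range := (hex1 n) ▸ hx
      obtain ⟨y, hy⟩ := hx'
      have : (b n) x = (i' n) ((a n) y) := by
        rw [← hy]
        exact congrArg (fun f => f y) (hcomm1 n)
      have hA : (a n) y = 0 := (hA' n le_rfl).elim _ _
      simp [AddMonoidHom.mem_ker, this, hA]
  refine ⟨by rw [hker, hex1 n], hker, ?_⟩
  exact ⟨((QuotientAddGroup.quotientKerEquivRange (b n)).symm.trans
    (QuotientAddGroup.quotientAddEquivOfEq hker)).trans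
    (QuotientAddGroup.quotientKerEquivRange (j n))⟩
end

section
/- With the data and hypotheses of the two connected long exact sequences (chain map (a_k, b_k, c_k) between long exact sequences of abelian groups, c_k an isomorphism for k ≤ n, A'_k = 0 for k ≥ n), the map b_n : B_n → B'_n is surjective if and only if the map A_{n-1} → A'_{n-1} ⊕ B_{n-1} given by x ↦ (a_{n-1}(x), i_{n-1}(x)) is injective. -/
/-- Abstract Steenrod reformulation: b_n is surjective iff
x ↦ (a_{n-1} x, i_{n-1} x) is injective. -/
theorem bn_surjective_iff_injective
    (A B C A' B' C' : ℤ → Type)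
    [∀ k, AddCommGroup (A k)] [∀ k, AddCommGroup (B k)] [∀ k, AddCommGroup (C k)]
    [∀ k, AddCommGroup (A' k)] [∀ k, AddCommGroup (B' k)] [∀ k, AddCommGroup (C' k)]
    (i : ∀ k, A k →+ B k) (j : ∀ k, B k →+ C k) (d : ∀ k, C k →+ A (k - 1))
    (i' : ∀ k, A' k →+ B' k) (j' : ∀ k, B' k →+ C' k) (d' : ∀ k, C' k →+ A' (k - 1))
    (a : ∀ k, A k →+ A' k) (b : ∀ k, B k →+ B' k) (c : ∀ k, C k →+ C' k)
    (hex1 : ∀ k, (i k).range = (j k).ker)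
    (hex2 : ∀ k, (j k).range = (d k).ker)
    (hex3 : ∀ k, (d k).range = (i (k - 1)).ker)
    (hex1' : ∀ k, (i' k).range = (j' k).ker)
    (hex2' : ∀ k, (j' k).range = (d' k).ker)
    (hex3' : ∀ k, (d' k).range = (i' (k - 1)).ker)
    (hcomm1 : ∀ k, (b k).comp (i k) = (i' k).comp (a k))
    (hcomm2 : ∀ k, (c k).comp (j k) = (j' k).comp (b k))
    (hcomm3 : ∀ k, (a (k - 1)).comp (d k) = (d' k).comp (c k))
    (n : ℤ)
    (hc : ∀ k ≤ n, Function.Bijective (c k))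
    (hA' : ∀ k ≥ n, Subsingleton (A' k)) :
    Function.Surjective (b n) ↔
      Function.Injective (fun x : A (n - 1) => (a (n - 1) x, i (n - 1) x)) := by

  have hc3 : ∀ y : C n, a (n-1) (d n y) = d' n (c n y) := fun y =>
    congrFun (congrArg DFunLike.coe (hcomm3 n)) y
  have hc2 : ∀ w : B n, c n (j n w) = j' n (b n w) := fun w =>
    congrFun (congrArg DFunLike.coe (hcomm2 n)) w
  constructor
  · intro hb x y hxy
    have hax : a (n-1) x = a (n-1) y := congrArg Prod.fst hxy
    have hix : i (n-1) x = i (n-1) y := congrArg Prod.snd hxy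
    have h0 : i (n-1) (x - y) = 0 := by rw [map_sub, hix, sub_self]
    have hx' : x - y ∈ (i (n-1)).ker := h0
    rw [← hex3 n] at hx'
    obtain ⟨u, hu⟩ := hx'
    have h1 : d' n (c n u) = 0 := by
      rw [← hc3 u, hu, map_sub, hax, sub_self]
    have h2 : c n u ∈ (j' n).range := by rw [hex2' n]; exact h1
    obtain ⟨z, hz⟩ := h2
    obtain ⟨w, hw⟩ := hb z
    have h3 : c n (j n w) = c n u := by rw [hc2 w, hw, hz]
    have h4 : j n w = u := (hc n le_rfl).injective h3
    have h5 : u ∈ (d n).ker := by rw [← hex2 n]; exact ⟨w, h4⟩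
    have h6 : x - y = 0 := by rw [← hu]; exact h5
    exact sub_eq_zero.mp h6
  · intro hinj z
    obtain ⟨y, hy⟩ := (hc n le_rfl).surjective (j' n z)
    have hz0 : d' n (j' n z) = 0 := by
      have : j' n z ∈ (d' n).ker := by rw [← hex2' n]; exact ⟨z, rfl⟩
      exact this
    have ha : a (n-1) (d n y) = 0 := by rw [hc3 y, hy, hz0]
    have hi0 : i (n-1) (d n y) = 0 := by
      have : d n y ∈ (i (n-1)).ker := by rw [← hex3 n]; exact ⟨y, rfl⟩
      exact this
    have hd : d n y = 0 := by
      have := @hinj (d n y) 0 (by simp [ha, hi0])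
      exact this
    have hy' : y ∈ (j n).range := by rw [hex2 n]; exact hd
    obtain ⟨w, hw⟩ := hy'
    have h6 : j' n (z - b n w) = 0 := by
      rw [map_sub, ← hc2 w, hw, hy, sub_self]
    have h7 : z - b n w ∈ (i' n).range := by rw [hex1' n]; exact h6
    obtain ⟨u, hu⟩ := h7
    have : Subsingleton (A' n) := hA' n le_rfl
    have hu0 : u = (0 : A' n) := Subsingleton.elim _ _
    refine ⟨w, ?_⟩
    have : z - b n w = 0 := by rw [← hu, hu0, map_zero]
    exact (sub_eq_zero.mp this).symm
end
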